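/- arXiv:1008.3241 — 2 statements merged into one kernel-verified Lean document; each statement's English description precedes it below -/
import Mathlib

section
/- If a semigroup S is a left I-order in a bisimple inverse ω-semigroup Q, then S is a straight left I-order in Q: every element of Q can be written as a⁻¹b with a, b ∈ S and a 𝓡 b in Q. -/
/-- Green's relation `𝓡`. -/
def GreenR {Q : Type*} [Mul Q] (a b : Q) : Prop :=
  a = b ∨ ∃ x y : Q, a * x = b ∧ b * y = a

/-- Green's relation `𝓛`. -/
def GreenL {Q : Type*} [Mul Q] (a b : Q) : Prop :=
  a = b ∨ ∃ x y : Q, x * a = b ∧ y * b = a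

/-- Green's relation `𝓓`. -/
def GreenD {Q : Type*} [Mul Q] (a b : Q) : Prop :=
  ∃ c : Q, GreenR a c ∧ GreenL c b

/-- `Q` is an inverse semigroup with inverse map `inv`: every `q` has `inv q` as its
unique (semigroup-theoretic) inverse. -/
def IsInverseSg (Q : Type*) [Mul Q] (inv : Q → Q) : Prop :=
  ∀ q : Q, (q * inv q * q = q ∧ inv q * q * inv q = inv q) ∧
    ∀ x : Q, q * x * q = q → x * q * x = x → x = inv q

/-- `Q` is bisimple: any two elements are `𝓓`-related. -/
def IsBisimple (Q : Type*) [Mul Q] : Prop := ∀ a b : Q, GreenD a b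

/-- The idempotents of `Q` are exactly `e 0 > e 1 > e 2 > ⋯`, an ω-chain
(ordering `e ≤ f ↔ e * f = f * e = e`). -/
def IsOmegaChain (Q : Type*) [Mul Q] (e : ℕ → Q) : Prop :=
  (∀ n, e n * e n = e n) ∧
  (∀ q : Q, q * q = q → ∃ n, q = e n) ∧
  (∀ n, e (n + 1) * e n = e (n + 1) ∧ e n * e (n + 1) = e (n + 1)) ∧
  Function.Injective e

/-- `T` is a left I-order in `Q` (with inverse map `inv`): every element of `Q` is
of the form `inv a * b` with `a, b ∈ T`. -/
def IsLeftIOrder {Q : Type*} [Mul Q] (inv : Q → Q) (T : Set Q) : Prop :=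
  ∀ q : Q, ∃ a ∈ T, ∃ b ∈ T, q = inv a * b

/-!
Since the idempotents of `Q` form a chain, for `q = a⁻¹b` we may assume `bb⁻¹ ≤ aa⁻¹`, passing
to `q⁻¹ = b⁻¹a` otherwise. Write the idempotent `f = bb⁻¹` as `x⁻¹y` with `x, y ∈ S`; since
`f = f⁻¹ = y⁻¹x` as well, we may also assume `xx⁻¹ ≤ yy⁻¹`. Then `x⁻¹x = f` and `yf = x`, so
`q = (xa)⁻¹(yb)` with `(xa)(xa)⁻¹ = xx⁻¹ = (yb)(yb)⁻¹`, that is, `xa 𝓡 yb`.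
-/

theorem GreenR.symm {Q : Type*} [Mul Q] {a b : Q} (h : GreenR a b) : GreenR b a := by
  rcases h with rfl | ⟨x, y, hxy, hyx⟩
  · exact Or.inl rfl
  · exact Or.inr ⟨y, x, hyx, hxy⟩

def IdempotentsFormChain (Q : Type*) [Mul Q] : Prop :=
  ∀ p q : Q, IsIdempotentElem p → IsIdempotentElem q → p * q = p ∨ q * p = q

namespace IsInverseSg

variable {Q : Type*} [Semigroup Q] {inv : Q → Q}

theorem mul_inv_mul (hinv : IsInverseSg Q inv) (q : Q) : q * inv q * q = q := (hinv q).1.1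

theorem inv_mul_inv (hinv : IsInverseSg Q inv) (q : Q) : inv q * q * inv q = inv q :=
  (hinv q).1.2

theorem eq_inv_of (hinv : IsInverseSg Q inv) {q x : Q} (h₁ : q * x * q = q)
    (h₂ : x * q * x = x) : x = inv q :=
  (hinv q).2 x h₁ h₂

theorem inv_inv (hinv : IsInverseSg Q inv) (q : Q) : inv (inv q) = q :=
  (hinv.eq_inv_of (hinv.inv_mul_inv q) (hinv.mul_inv_mul q)).symm

theorem inv_eq_self (hinv : IsInverseSg Q inv) {p : Q} (hp : IsIdempotentElem p) : inv p = p :=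
  (hinv.eq_inv_of (by rw [hp.eq, hp.eq]) (by rw [hp.eq, hp.eq])).symm

theorem isIdempotentElem_mul_inv (hinv : IsInverseSg Q inv) (q : Q) :
    IsIdempotentElem (q * inv q) := by
  rw [IsIdempotentElem, ← mul_assoc, hinv.mul_inv_mul]

theorem isIdempotentElem_inv_mul (hinv : IsInverseSg Q inv) (q : Q) :
    IsIdempotentElem (inv q * q) := by
  rw [IsIdempotentElem, ← mul_assoc, hinv.inv_mul_inv]

/-- `q (pq)⁻¹ p` is an inverse of `pq`, hence equals `(pq)⁻¹`, which is therefore idempotent. -/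
theorem isIdempotentElem_mul (hinv : IsInverseSg Q inv) {p q : Q} (hp : IsIdempotentElem p)
    (hq : IsIdempotentElem q) : IsIdempotentElem (p * q) := by
  set g := inv (p * q)
  have hg : g * (p * q) * g = g := hinv.inv_mul_inv (p * q)
  have hqgp : q * g * p = g := by
    refine hinv.eq_inv_of ?_ ?_
    · calc p * q * (q * g * p) * (p * q) = (p * q) * g * (p * q) := by
            simp only [mul_assoc, ← mul_assoc q q, ← mul_assoc p p, hp.eq, hq.eq]
        _ = p * q := hinv.mul_inv_mul (p * q)
    · calc q * g * p * (p * q) * (q * g * p) = q * (g * (p * q) * g) * p := by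
            simp only [mul_assoc, ← mul_assoc q q, ← mul_assoc p p, hp.eq, hq.eq]
        _ = q * g * p := by rw [hg]
  have hg_idem : IsIdempotentElem g := by
    calc g * g = q * g * p * (q * g * p) := by rw [hqgp]
      _ = q * (g * (p * q) * g) * p := by simp only [mul_assoc]
      _ = g := by rw [hg, hqgp]
  rw [← hinv.inv_inv (p * q), hinv.inv_eq_self hg_idem]
  exact hg_idem

theorem mul_comm_of_isIdempotentElem (hinv : IsInverseSg Q inv) {p q : Q}
    (hp : IsIdempotentElem p) (hq : IsIdempotentElem q) : p * q = q * p := by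
  have hpq := hinv.isIdempotentElem_mul hp hq
  have hqp := hinv.isIdempotentElem_mul hq hp
  have hqp_inv : q * p = inv (p * q) := by
    refine hinv.eq_inv_of ?_ ?_
    · calc p * q * (q * p) * (p * q) = (p * q) * (p * q) := by
            simp only [mul_assoc, ← mul_assoc q q, ← mul_assoc p p, hp.eq, hq.eq]
        _ = p * q := hpq.eq
    · calc q * p * (p * q) * (q * p) = (q * p) * (q * p) := by
            simp only [mul_assoc, ← mul_assoc q q, ← mul_assoc p p, hp.eq, hq.eq]
        _ = q * p := hqp.eq
  rw [hqp_inv, hinv.inv_eq_self hpq]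

theorem inv_mul (hinv : IsInverseSg Q inv) (a b : Q) : inv (a * b) = inv b * inv a := by
  have hcomm : b * inv b * (inv a * a) = inv a * a * (b * inv b) :=
    hinv.mul_comm_of_isIdempotentElem (hinv.isIdempotentElem_mul_inv b)
      (hinv.isIdempotentElem_inv_mul a)
  refine (hinv.eq_inv_of ?_ ?_).symm
  · calc a * b * (inv b * inv a) * (a * b) = a * (b * inv b * (inv a * a)) * b := by
          simp only [mul_assoc]
      _ = a * inv a * a * (b * inv b * b) := by rw [hcomm]; simp only [mul_assoc]
      _ = a * b := by rw [hinv.mul_inv_mul, hinv.mul_inv_mul]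
  · calc inv b * inv a * (a * b) * (inv b * inv a) = inv b * (inv a * a * (b * inv b)) * inv a := by
          simp only [mul_assoc]
      _ = inv b * b * inv b * (inv a * a * inv a) := by rw [← hcomm]; simp only [mul_assoc]
      _ = inv b * inv a := by rw [hinv.inv_mul_inv, hinv.inv_mul_inv]

theorem mul_mul_inv (hinv : IsInverseSg Q inv) (a b : Q) :
    a * b * inv (a * b) = a * (b * inv b) * inv a := by
  rw [hinv.inv_mul]; simp only [mul_assoc]

theorem inv_inv_mul (hinv : IsInverseSg Q inv) (a b : Q) : inv (inv a * b) = inv b * a := by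
  rw [hinv.inv_mul, hinv.inv_inv]

theorem inv_mul_eq_of_isIdempotentElem (hinv : IsInverseSg Q inv) {x y : Q}
    (h : IsIdempotentElem (inv x * y)) : inv y * x = inv x * y := by
  rw [← hinv.inv_inv_mul, hinv.inv_eq_self h]

theorem greenR_of_mul_inv_eq (hinv : IsInverseSg Q inv) {a b : Q}
    (h : a * inv a = b * inv b) : GreenR a b := by
  refine Or.inr ⟨inv a * b, inv b * a, ?_, ?_⟩
  · rw [← mul_assoc, h, hinv.mul_inv_mul]
  · rw [← mul_assoc, ← h, hinv.mul_inv_mul]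

theorem straight_rep_of_le (hinv : IsInverseSg Q inv) {a b x y : Q} (hf : b * inv b = inv x * y)
    (hxy : x * inv x * (y * inv y) = x * inv x) (hba : b * inv b * (a * inv a) = b * inv b) :
    x * a * inv (x * a) = y * b * inv (y * b) ∧ inv (x * a) * (y * b) = inv a * b := by
  set f := b * inv b with hf_def
  have hf_idem : IsIdempotentElem f := hinv.isIdempotentElem_mul_inv b
  have hf' : inv y * x = f := by
    rw [hf] at hf_idem ⊢; exact hinv.inv_mul_eq_of_isIdempotentElem hf_idem
  have hxx : inv x * x = f := by
    calc inv x * x = inv x * (x * inv x * (y * inv y)) * x := by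
          rw [hxy, ← mul_assoc, hinv.inv_mul_inv]
      _ = inv x * x * inv x * y * (inv y * x) := by simp only [mul_assoc]
      _ = f := by rw [hinv.inv_mul_inv, hf', ← hf, hf_idem.eq]
  have hyf : y * f = x := by
    calc y * f = y * inv y * x := by rw [← hf', mul_assoc]
      _ = y * inv y * (x * inv x) * x := by rw [mul_assoc (y * inv y), hinv.mul_inv_mul]
      _ = x * inv x * (y * inv y) * x := by
          rw [hinv.mul_comm_of_isIdempotentElem (hinv.isIdempotentElem_mul_inv y)
            (hinv.isIdempotentElem_mul_inv x)]
      _ = x := by rw [hxy, hinv.mul_inv_mul]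
  refine ⟨?_, ?_⟩
  · calc x * a * inv (x * a) = x * inv x * x * (a * inv a) * inv x := by
          rw [hinv.mul_mul_inv, hinv.mul_inv_mul]
      _ = x * (inv x * x) * inv x := by
          rw [mul_assoc x, mul_assoc x (inv x * x), hxx, hba, ← hxx]
      _ = y * f * inv (y * f) := by rw [hyf, ← mul_assoc, hinv.mul_inv_mul]
      _ = y * (f * inv f) * inv y := hinv.mul_mul_inv y f
      _ = y * b * inv (y * b) := by
          rw [hinv.inv_eq_self hf_idem, hf_idem.eq, hinv.mul_mul_inv]
  · rw [hinv.inv_mul, mul_assoc, ← mul_assoc (inv x), ← hf, hf_def, hinv.mul_inv_mul]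

theorem exists_straight_of_le (hinv : IsInverseSg Q inv) (htot : IdempotentsFormChain Q)
    {S : Subsemigroup Q} (hS : IsLeftIOrder inv (S : Set Q)) {a b : Q} (ha : a ∈ S) (hb : b ∈ S)
    (hba : b * inv b * (a * inv a) = b * inv b) :
    ∃ c ∈ S, ∃ d ∈ S, inv a * b = inv c * d ∧ GreenR c d := by
  obtain ⟨x, hx, y, hy, hf⟩ := hS (b * inv b)
  have hf_idem : IsIdempotentElem (inv x * y) := hf ▸ hinv.isIdempotentElem_mul_inv b
  have hf' : b * inv b = inv y * x := by rw [hf, hinv.inv_mul_eq_of_isIdempotentElem hf_idem]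
  rcases htot _ _ (hinv.isIdempotentElem_mul_inv x) (hinv.isIdempotentElem_mul_inv y) with
    hxy | hyx
  · obtain ⟨hR, hrep⟩ := hinv.straight_rep_of_le hf hxy hba
    exact ⟨x * a, S.mul_mem hx ha, y * b, S.mul_mem hy hb, hrep.symm,
      hinv.greenR_of_mul_inv_eq hR⟩
  · obtain ⟨hR, hrep⟩ := hinv.straight_rep_of_le hf' hyx hba
    exact ⟨y * a, S.mul_mem hy ha, x * b, S.mul_mem hx hb, hrep.symm,
      hinv.greenR_of_mul_inv_eq hR⟩

theorem straight_of_idempotentsFormChain (hinv : IsInverseSg Q inv)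
    (htot : IdempotentsFormChain Q) {S : Subsemigroup Q} (hS : IsLeftIOrder inv (S : Set Q))
    (q : Q) : ∃ a ∈ S, ∃ b ∈ S, q = inv a * b ∧ GreenR a b := by
  obtain ⟨a, ha, b, hb, rfl⟩ := hS q
  rcases htot _ _ (hinv.isIdempotentElem_mul_inv b) (hinv.isIdempotentElem_mul_inv a) with
    hba | hab
  · exact hinv.exists_straight_of_le htot hS ha hb hba
  · obtain ⟨c, hc, d, hd, hrep, hR⟩ := hinv.exists_straight_of_le htot hS hb ha hab
    refine ⟨d, hd, c, hc, ?_, hR.symm⟩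
    rw [← hinv.inv_inv_mul b a, hrep, hinv.inv_inv_mul]

end IsInverseSg

theorem IsOmegaChain.mul_eq_of_le {Q : Type*} [Semigroup Q] {e : ℕ → Q}
    (hchain : IsOmegaChain Q e) {m n : ℕ} (h : m ≤ n) : e m * e n = e n ∧ e n * e m = e n := by
  induction n, h using Nat.le_induction with
  | base => exact ⟨hchain.1 m, hchain.1 m⟩
  | succ n _ ih =>
    obtain ⟨hlt, hgt⟩ := hchain.2.2.1 n
    constructor
    · rw [← hgt, ← mul_assoc, ih.1]
    · rw [← hlt, mul_assoc, ih.2]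

theorem IsOmegaChain.idempotentsFormChain {Q : Type*} [Semigroup Q] {e : ℕ → Q}
    (hchain : IsOmegaChain Q e) : IdempotentsFormChain Q := by
  intro p q hp hq
  obtain ⟨m, rfl⟩ := hchain.2.1 p hp
  obtain ⟨n, rfl⟩ := hchain.2.1 q hq
  rcases le_total m n with h | h
  · exact Or.inr (hchain.mul_eq_of_le h).2
  · exact Or.inl (hchain.mul_eq_of_le h).2

theorem stmt1_general {Q : Type*} [Semigroup Q] (inv : Q → Q) (e : ℕ → Q)
    (hinv : IsInverseSg Q inv) (hchain : IsOmegaChain Q e)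
    (S : Subsemigroup Q) (hS : IsLeftIOrder inv (S : Set Q)) :
    ∀ q : Q, ∃ a ∈ S, ∃ b ∈ S, q = inv a * b ∧ GreenR a b :=
  hinv.straight_of_idempotentsFormChain hchain.idempotentsFormChain hS

/-- A left I-order in a bisimple inverse ω-semigroup is straight. -/
theorem stmt1 {Q : Type*} [Semigroup Q] (inv : Q → Q) (e : ℕ → Q)
    (hinv : IsInverseSg Q inv) (hbis : IsBisimple Q) (hchain : IsOmegaChain Q e)
    (S : Subsemigroup Q) (hS : IsLeftIOrder inv (S : Set Q)) :
    ∀ q : Q, ∃ a ∈ S, ∃ b ∈ S, q = inv a * b ∧ GreenR a b :=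
  stmt1_general inv e hinv hchain S hS
end

section
/- Let S be a semigroup satisfying conditions (A), (B), (C). Suppose (a₁,b₁) ~ (a₂,b₂) and (c₁,d₁) ~ (c₂,d₂) in Σ. Suppose x, y ∈ S satisfy xb₁ = yc₁, r(x) = r(y), l(x) = r(b₁) − l(b₁) + max(l(b₁), l(c₁)), l(y) = r(c₁) − l(c₁) + max(l(b₁), l(c₁)), and x̄, ȳ ∈ S satisfy x̄b₂ = ȳc₂, r(x̄) = r(ȳ), l(x̄) = r(b₂) − l(b₂) + max(l(b₂), l(c₂)), l(ȳ) = r(c₂) − l(c₂) + max(l(b₂), l(c₂)). Then (xa₁, yd₁) ~ (x̄a₂, ȳd₂); hence the multiplication [a,b][c,d] = [xa, yd] on the set Q of ~-classes is well defined. -/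
/-- The bicyclic semigroup `𝓑` carried by `ℕ × ℕ`, an element being `(r, l)`;
`(m,n)(p,q) = (m - n + t, q - p + t)` with `t = max n p`. -/
structure Bicyclic where
  r : ℕ
  l : ℕ

instance : Mul Bicyclic :=
  ⟨fun x y => ⟨x.r + (max x.l y.r - x.l), y.l + (max x.l y.r - y.r)⟩⟩

/-- The inverse `(m,n)⁻¹ = (n,m)` in the bicyclic semigroup. -/
def Bicyclic.inv (x : Bicyclic) : Bicyclic := ⟨x.l, x.r⟩

/-- `T` is a left I-order in the bicyclic semigroup `𝓑`. -/
def IsLeftIOrderBic (T : Set Bicyclic) : Prop :=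
  ∀ q : Bicyclic, ∃ a ∈ T, ∃ b ∈ T, q = a.inv * b

/-- `r a`, the first coordinate of `φ a` in `𝓑`. -/
def rr {S : Type*} [Mul S] (φ : S →ₙ* Bicyclic) (a : S) : ℕ := (φ a).r

/-- `l a`, the second coordinate of `φ a` in `𝓑`. -/
def ll {S : Type*} [Mul S] (φ : S →ₙ* Bicyclic) (a : S) : ℕ := (φ a).l

/-- Condition (A): the image of `φ` is a left I-order in `𝓑`. -/
def CondA {S : Type*} [Mul S] (φ : S →ₙ* Bicyclic) : Prop :=
  IsLeftIOrderBic (Set.range (⇑φ))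

/-- Condition (B)(i): if `l x, l y ≥ r a` and `x * a = y * a` then `x = y`. -/
def CondBi {S : Type*} [Mul S] (φ : S →ₙ* Bicyclic) : Prop :=
  ∀ x y a : S, rr φ a ≤ ll φ x → rr φ a ≤ ll φ y → x * a = y * a → x = y

/-- Condition (B)(ii): if `r x, r y ≥ l a` and `a * x = a * y` then `x = y`. -/
def CondBii {S : Type*} [Mul S] (φ : S →ₙ* Bicyclic) : Prop :=
  ∀ x y a : S, ll φ a ≤ rr φ x → ll φ a ≤ rr φ y → a * x = a * y → x = y

/-- Condition (C): for all `b c` there are `x y` with `x * b = y * c`,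
`r x = r y`, `l x = r b - l b + max (l b) (l c)` and
`l y = r c - l c + max (l b) (l c)`. -/
def CondC {S : Type*} [Mul S] (φ : S →ₙ* Bicyclic) : Prop :=
  ∀ b c : S, ∃ x y : S, x * b = y * c ∧ rr φ x = rr φ y ∧
    ll φ x = rr φ b + (max (ll φ b) (ll φ c) - ll φ b) ∧
    ll φ y = rr φ c + (max (ll φ b) (ll φ c) - ll φ c)

/-- `Σ = {(a,b) ∈ S × S : r a = r b}`. -/
abbrev Sig {S : Type*} [Mul S] (φ : S →ₙ* Bicyclic) : Type _ :=
  {p : S × S // rr φ p.1 = rr φ p.2}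

/-- The relation `∼` on pairs: `(a,b) ∼ (c,d)` iff there are `x y` with
`x * a = y * c`, `x * b = y * d`, `l x = r a`, `l y = r c`, `r x = r y`. -/
def simP {S : Type*} [Mul S] (φ : S →ₙ* Bicyclic) (p q : S × S) : Prop :=
  ∃ x y : S, x * p.1 = y * q.1 ∧ x * p.2 = y * q.2 ∧
    ll φ x = rr φ p.1 ∧ ll φ y = rr φ q.1 ∧ rr φ x = rr φ y

/-- The relation `∼` on `Σ`. -/
def sim {S : Type*} [Mul S] (φ : S →ₙ* Bicyclic) (p q : Sig φ) : Prop :=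
  simP φ p.1 q.1


/-!
If `(a, b) ∼ (c, d)` and `X a = Y c` where `X, Y` exceed `a, c` in degree by the same amount
(`l X = r a + e`, `l Y = r c + e`, `r X = r Y`), then also `X b = Y d`: condition (C) gives a
common left multiple `k s = k' X` of a witness `s` and `X`, after which (B)(i) cancels `c` and
(B)(ii) cancels `k'`. Condition (C), applied twice, also lets `∼` be multiplied on the left by
such `x, x̄`. Doing this with `x, x̄` and `(a₁, b₁) ∼ (a₂, b₂)`, and then passing through
`x b₁ = y c₁` to `(c₁, d₁) ∼ (c₂, d₂)`, shows that `u y d₁ = v ȳ d₂` for the same `u, v` that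
give `u x a₁ = v x̄ a₂`.
-/

section Degrees

variable {S : Type*} [Mul S] {φ : S →ₙ* Bicyclic}

theorem rr_mul (a b : S) : rr φ (a * b) = rr φ a + (max (ll φ a) (rr φ b) - ll φ a) := by
  simp only [rr, ll, map_mul]; rfl

theorem ll_mul (a b : S) : ll φ (a * b) = ll φ b + (max (ll φ a) (rr φ b) - rr φ b) := by
  simp only [rr, ll, map_mul]; rfl

theorem rr_le_rr_mul (a b : S) : rr φ a ≤ rr φ (a * b) := by
  rw [rr_mul]; omega

theorem rr_mul_of_rr_le {a b : S} (h : rr φ b ≤ ll φ a) : rr φ (a * b) = rr φ a := by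
  rw [rr_mul, max_eq_left h]; omega

theorem ll_mul_of_rr_le {a b : S} (h : rr φ b ≤ ll φ a) :
    ll φ (a * b) = ll φ b + (ll φ a - rr φ b) := by
  rw [ll_mul, max_eq_left h]

theorem ll_mul_of_ll_eq_rr {a b : S} (h : ll φ a = rr φ b) : ll φ (a * b) = ll φ b := by
  rw [ll_mul_of_rr_le h.ge]; omega

theorem simP.ll_fst_eq {a b c d : S} (h : simP φ (a, b) (c, d)) : ll φ a = ll φ c := by
  obtain ⟨s, t, hsc, -, hs, ht, -⟩ := h
  calc ll φ a = ll φ (s * a) := (ll_mul_of_ll_eq_rr hs).symm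
    _ = ll φ (t * c) := congrArg _ hsc
    _ = ll φ c := ll_mul_of_ll_eq_rr ht

theorem simP.ll_snd_eq {a b c d : S} (h : simP φ (a, b) (c, d)) (hab : rr φ a = rr φ b)
    (hcd : rr φ c = rr φ d) : ll φ b = ll φ d := by
  obtain ⟨s, t, -, hsd, hs, ht, -⟩ := h
  calc ll φ b = ll φ (s * b) := (ll_mul_of_ll_eq_rr (hs.trans hab)).symm
    _ = ll φ (t * d) := congrArg _ hsd
    _ = ll φ d := ll_mul_of_ll_eq_rr (ht.trans hcd)

theorem CondC.exists_mul_eq_mul_of_ll_le (hC : CondC φ) {s x : S} (h : ll φ s ≤ ll φ x) :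
    ∃ u w : S, u * x = w * s ∧ rr φ u = rr φ w ∧ ll φ u = rr φ x ∧
      ll φ w = rr φ s + (ll φ x - ll φ s) := by
  obtain ⟨u, w, huw, hr, hlu, hlw⟩ := hC x s
  rw [max_eq_left h] at hlu hlw
  exact ⟨u, w, huw, hr, by omega, hlw⟩

end Degrees

section Compatibility

variable {S : Type*} [Semigroup S] {φ : S →ₙ* Bicyclic}

theorem simP.mul_snd_eq_of_mul_fst_eq (hBi : CondBi φ) (hBii : CondBii φ) (hC : CondC φ)
    {a b c d X Y : S} {e : ℕ} (h : simP φ (a, b) (c, d)) (hXY : X * a = Y * c)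
    (hr : rr φ X = rr φ Y) (hlX : ll φ X = rr φ a + e) (hlY : ll φ Y = rr φ c + e) :
    X * b = Y * d := by
  obtain ⟨s, t, hsc, hsd, hs, ht, hst⟩ := h
  dsimp only at hsc hsd hs ht
  obtain ⟨k', k, hk, -, hlk', hlk⟩ :=
    hC.exists_mul_eq_mul_of_ll_le (s := s) (x := X) (by omega)
  have hkt : k * t = k' * Y := by
    refine hBi _ _ c ?_ ?_ ?_
    · rw [ll_mul_of_rr_le (by omega)]; omega
    · rw [ll_mul_of_rr_le (by omega)]; omega
    · rw [mul_assoc, ← hsc, ← mul_assoc, ← hk, mul_assoc, hXY, mul_assoc]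
  refine hBii _ _ k' (hlk' ▸ rr_le_rr_mul X b) (hlk' ▸ hr ▸ rr_le_rr_mul Y d) ?_
  rw [← mul_assoc, hk, mul_assoc, hsd, ← mul_assoc, hkt, mul_assoc]

theorem simP.mul_left (hBi : CondBi φ) (hBii : CondBii φ) (hC : CondC φ)
    {a₁ b₁ a₂ b₂ x x' : S} {e : ℕ} (h : simP φ (a₁, b₁) (a₂, b₂))
    (hx : ll φ x = rr φ a₁ + e) (hx' : ll φ x' = rr φ a₂ + e) :
    simP φ (x * a₁, x * b₁) (x' * a₂, x' * b₂) := by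
  have ⟨s, t, hsc, _, hs, ht, _⟩ := h
  dsimp only at hsc hs ht
  obtain ⟨u₀, w, hu₀, hru₀, hlu₀, hlw⟩ :=
    hC.exists_mul_eq_mul_of_ll_le (s := s) (x := x) (by omega)
  obtain ⟨v₀, w', hv₀, hrv₀, hlv₀, hlw'⟩ :=
    hC.exists_mul_eq_mul_of_ll_le (s := t) (x := x') (by omega)
  obtain ⟨g, g', hg, hrg, hlg, hlg'⟩ :=
    hC.exists_mul_eq_mul_of_ll_le (s := w') (x := w) (by omega)
  have hUX : (g * u₀ * x) * a₁ = (g' * v₀ * x') * a₂ :=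
    calc g * u₀ * x * a₁ = g * w * (s * a₁) := by
          rw [mul_assoc g u₀ x, hu₀]; simp only [mul_assoc]
      _ = g' * w' * (t * a₂) := by rw [hg, hsc]
      _ = g' * v₀ * x' * a₂ := by
          rw [mul_assoc g' v₀ x', hv₀]; simp only [mul_assoc]
  have hlU : ll φ (g * u₀) = rr φ x := by rw [ll_mul_of_ll_eq_rr (by omega), hlu₀]
  have hlV : ll φ (g' * v₀) = rr φ x' := by rw [ll_mul_of_ll_eq_rr (by omega), hlv₀]
  have hrU : rr φ (g * u₀) = rr φ g := rr_mul_of_rr_le (by omega)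
  have hrV : rr φ (g' * v₀) = rr φ g' := rr_mul_of_rr_le (by omega)
  have hrx : rr φ (x * a₁) = rr φ x := rr_mul_of_rr_le (by omega)
  have hrx' : rr φ (x' * a₂) = rr φ x' := rr_mul_of_rr_le (by omega)
  have hUXb : (g * u₀ * x) * b₁ = (g' * v₀ * x') * b₂ := by
    refine h.mul_snd_eq_of_mul_fst_eq hBi hBii hC (e := e) hUX ?_ ?_ ?_
    · rw [rr_mul_of_rr_le hlU.ge, rr_mul_of_rr_le hlV.ge]; omega
    · rw [ll_mul_of_ll_eq_rr hlU, hx]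
    · rw [ll_mul_of_ll_eq_rr hlV, hx']
  refine ⟨g * u₀, g' * v₀, ?_, ?_, hlU.trans hrx.symm, hlV.trans hrx'.symm, by omega⟩
  · simpa only [mul_assoc] using hUX
  · simpa only [mul_assoc] using hUXb

end Compatibility

theorem stmt8_general {S : Type*} [Semigroup S] (φ : S →ₙ* Bicyclic)
    (hBi : CondBi φ) (hBii : CondBii φ) (hC : CondC φ)
    (a₁ b₁ a₂ b₂ c₁ d₁ c₂ d₂ x y x' y' : S)
    (h₁ : rr φ a₁ = rr φ b₁) (h₂ : rr φ a₂ = rr φ b₂)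
    (hab : simP φ (a₁, b₁) (a₂, b₂)) (hcd : simP φ (c₁, d₁) (c₂, d₂))
    (hxy : x * b₁ = y * c₁) (hrxy : rr φ x = rr φ y)
    (hlx : ll φ x = rr φ b₁ + (max (ll φ b₁) (ll φ c₁) - ll φ b₁))
    (hly : ll φ y = rr φ c₁ + (max (ll φ b₁) (ll φ c₁) - ll φ c₁))
    (hxy' : x' * b₂ = y' * c₂) (hrxy' : rr φ x' = rr φ y')
    (hlx' : ll φ x' = rr φ b₂ + (max (ll φ b₂) (ll φ c₂) - ll φ b₂))
    (hly' : ll φ y' = rr φ c₂ + (max (ll φ b₂) (ll φ c₂) - ll φ c₂)) :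
    simP φ (x * a₁, y * d₁) (x' * a₂, y' * d₂) := by
  rw [← hab.ll_snd_eq h₁ h₂, ← hcd.ll_fst_eq] at hlx' hly'
  obtain ⟨u, v, hux, hub, hlu, hlv, hruv⟩ := hab.mul_left hBi hBii hC (x := x) (x' := x')
    (e := max (ll φ b₁) (ll φ c₁) - ll φ b₁) (by omega) (by omega)
  dsimp only at hux hub hlu hlv
  have hlu_y : ll φ u = rr φ y := by rw [hlu, rr_mul_of_rr_le (by omega), hrxy]
  have hlv_y : ll φ v = rr φ y' := by rw [hlv, rr_mul_of_rr_le (by omega), hrxy']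
  have huyc : (u * y) * c₁ = (v * y') * c₂ := by
    rw [mul_assoc, ← hxy, hub, hxy', mul_assoc]
  have huyd : (u * y) * d₁ = (v * y') * d₂ :=
    hcd.mul_snd_eq_of_mul_fst_eq hBi hBii hC huyc
      (by rw [rr_mul_of_rr_le hlu_y.ge, rr_mul_of_rr_le hlv_y.ge, hruv])
      (by rw [ll_mul_of_ll_eq_rr hlu_y, hly]) (by rw [ll_mul_of_ll_eq_rr hlv_y, hly'])
  exact ⟨u, v, hux, by simpa only [mul_assoc] using huyd, hlu, hlv, hruv⟩

/-- Well-definedness of the multiplication: equivalent representatives with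
condition-(C) witnesses give `∼`-equivalent products. -/
theorem stmt8 {S : Type*} [Semigroup S] (φ : S →ₙ* Bicyclic)
    (hA : CondA φ) (hBi : CondBi φ) (hBii : CondBii φ) (hC : CondC φ)
    (a₁ b₁ a₂ b₂ c₁ d₁ c₂ d₂ x y x' y' : S)
    (h₁ : rr φ a₁ = rr φ b₁) (h₂ : rr φ a₂ = rr φ b₂)
    (h₃ : rr φ c₁ = rr φ d₁) (h₄ : rr φ c₂ = rr φ d₂)
    (hab : simP φ (a₁, b₁) (a₂, b₂)) (hcd : simP φ (c₁, d₁) (c₂, d₂))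
    (hxy : x * b₁ = y * c₁) (hrxy : rr φ x = rr φ y)
    (hlx : ll φ x = rr φ b₁ + (max (ll φ b₁) (ll φ c₁) - ll φ b₁))
    (hly : ll φ y = rr φ c₁ + (max (ll φ b₁) (ll φ c₁) - ll φ c₁))
    (hxy' : x' * b₂ = y' * c₂) (hrxy' : rr φ x' = rr φ y')
    (hlx' : ll φ x' = rr φ b₂ + (max (ll φ b₂) (ll φ c₂) - ll φ b₂))
    (hly' : ll φ y' = rr φ c₂ + (max (ll φ b₂) (ll φ c₂) - ll φ c₂)) :
    simP φ (x * a₁, y * d₁) (x' * a₂, y' * d₂) :=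
  stmt8_general φ hBi hBii hC a₁ b₁ a₂ b₂ c₁ d₁ c₂ d₂ x y x' y' h₁ h₂ hab hcd hxy hrxy hlx hly hxy'
    hrxy' hlx' hly'
end
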